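/- Let λ > 1, α > 0, 0 < β < α, δ > 0, and set γ = √(α² − β²). If x ∈ ℝ satisfies (x/√(δ² + x²)) · K_{λ−3/2}(α√(δ² + x²)) / K_{λ−1/2}(α√(δ² + x²)) = β/α (the mode equation of the generalized hyperbolic distribution GH(λ, α, β, δ, 0)), then x < (β/γ²)·[λ − 1 + √((λ − 1)² + δ²γ²)]. Moreover the inequality is reversed if λ < 1, and equality holds (i.e. x equals the right-hand side) if λ = 1. -/

import Mathlib

open Real MeasureTheory

/-- Modified Bessel function of the second kind. -/
noncomputable def besselK (ν x : ℝ) : ℝ :=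
  ∫ t in Set.Ioi (0:ℝ), Real.exp (-x * Real.cosh t) * Real.cosh (ν * t)

/-!
Put `μ = λ - 1`, `A = K_{μ+1/2}`, `B = K_{μ-1/2}` and `Q(y) = y A² - 2 μ A B - y B²`. The
recurrence `y (K_{ν+1} - K_{ν-1}) = 2 ν K_ν` and `K_ν' = -(K_{ν-1} + K_{ν+1}) / 2` give
`Q'(y) = 2 μ A B / y`, and `Q → 0` at infinity, so `Q` has the sign of `-μ` (`K_{-ν} = K_ν`
handles `μ ≤ 0`). Since `y Q = (y A - (μ + √(μ² + y²)) B) (y A + (√(μ² + y²) - μ) B)` with a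
positive second factor, the sign of `Q` tells on which side of `μ + √(μ² + y²)` the ratio
`y A / B` lies. The mode equation reads `α² x B = β y A` at `y = α √(δ² + x²)`, so the sign of
`-μ` is also that of `α² x - β (μ + √(μ² + α² (δ² + x²)))`. As `β < α` this is strictly increasing
in `x`, and it vanishes at `β / γ² (μ + √(μ² + δ² γ²))`.
-/

open Set Filter Topology

lemma one_add_sq_div_two_le_cosh (t : ℝ) : 1 + t ^ 2 / 2 ≤ cosh t := by
  have hterm (n : ℕ) : 0 ≤ t ^ (2 * n) / (2 * n).factorial := by
    rw [pow_mul]; positivity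
  have h := sum_le_hasSum ({0, 1} : Finset ℕ) (fun n _ => hterm n) (hasSum_cosh t)
  norm_num [Finset.sum_pair, Nat.factorial] at h
  linarith

lemma abs_sinh_le_cosh (t : ℝ) : |sinh t| ≤ cosh t := by
  rw [abs_sinh, ← cosh_abs]
  exact (sinh_lt_cosh _).le

lemma cosh_le_exp_abs (t : ℝ) : cosh t ≤ exp |t| := by
  rw [cosh_eq]
  linarith [exp_le_exp.2 (le_abs_self t), exp_le_exp.2 (neg_le_abs t)]

lemma cosh_mul_cosh_mul (ν t : ℝ) :
    cosh t * cosh (ν * t) = (cosh ((ν + 1) * t) + cosh ((ν - 1) * t)) / 2 := by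
  rw [add_mul, sub_mul, one_mul, cosh_add, cosh_sub]; ring

lemma sinh_mul_sinh_mul (ν t : ℝ) :
    sinh t * sinh (ν * t) = (cosh ((ν + 1) * t) - cosh ((ν - 1) * t)) / 2 := by
  rw [add_mul, sub_mul, one_mul, cosh_add, cosh_sub]; ring

lemma exp_neg_mul_cosh_mul_cosh_le {x : ℝ} (hx : 0 < x) (ν t : ℝ) :
    exp (-x * cosh t) * cosh (ν * t) ≤ exp (ν ^ 2 / x - x) * exp (-(x / 4) * t ^ 2) := by
  rw [← exp_add]
  refine (mul_le_mul_of_nonneg_left (cosh_le_exp_abs _) (exp_nonneg _)).trans ?_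
  rw [← exp_add, exp_le_exp, abs_mul]
  have hamgm : x * (|ν| * |t|) ≤ ν ^ 2 + x ^ 2 * t ^ 2 / 4 := by
    nlinarith [sq_nonneg (|ν| - x * |t| / 2), sq_abs ν, sq_abs t]
  have hcosh := one_add_sq_div_two_le_cosh t
  have : |ν| * |t| ≤ ν ^ 2 / x + x * t ^ 2 / 4 := by
    rw [div_add' _ _ _ hx.ne', le_div_iff₀ hx]; nlinarith
  nlinarith

lemma integrable_exp_neg_mul_cosh_mul_cosh {x : ℝ} (hx : 0 < x) (ν : ℝ) :
    Integrable (fun t => exp (-x * cosh t) * cosh (ν * t)) :=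
  ((integrable_exp_neg_mul_sq (by positivity : 0 < x / 4)).const_mul _).mono'
    (by fun_prop) (Eventually.of_forall fun t => by
      rw [Real.norm_of_nonneg (by positivity)]
      exact exp_neg_mul_cosh_mul_cosh_le hx ν t)

lemma besselK_pos (ν : ℝ) {x : ℝ} (hx : 0 < x) : 0 < besselK ν x := by
  rw [besselK, setIntegral_pos_iff_support_of_nonneg_ae
    (Eventually.of_forall fun t => by positivity)
    (integrable_exp_neg_mul_cosh_mul_cosh hx ν).integrableOn]
  have hsupp : Function.support (fun t => exp (-x * cosh t) * cosh (ν * t)) = univ :=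
    Function.support_eq_univ fun t => by positivity
  rw [hsupp, univ_inter]
  simp

lemma besselK_neg_order (ν x : ℝ) : besselK (-ν) x = besselK ν x := by
  simp only [besselK, neg_mul, cosh_neg]

lemma besselK_recurrence (ν : ℝ) {x : ℝ} (hx : 0 < x) :
    x * (besselK (ν + 1) x - besselK (ν - 1) x) = 2 * ν * besselK ν x := by
  set k : ℝ → ℝ → ℝ := fun ν t => exp (-x * cosh t) * cosh (ν * t)
  have hk (ν : ℝ) : IntegrableOn (k ν) (Ioi 0) :=
    (integrable_exp_neg_mul_cosh_mul_cosh hx ν).integrableOn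
  set H : ℝ → ℝ := fun t => -exp (-x * cosh t) * sinh (ν * t)
  set g : ℝ → ℝ := fun t => x / 2 * k (ν + 1) t - x / 2 * k (ν - 1) t - ν * k ν t
  have hderiv (t : ℝ) : HasDerivAt H (g t) t := by
    have hexp : HasDerivAt (fun t => exp (-x * cosh t)) (exp (-x * cosh t) * (-x * sinh t)) t :=
      ((hasDerivAt_cosh t).const_mul (-x)).exp
    have hsinh : HasDerivAt (fun t => sinh (ν * t)) (cosh (ν * t) * ν) t := by
      simpa using ((hasDerivAt_id t).const_mul ν).sinh
    refine (hexp.neg.mul hsinh).congr_deriv ?_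
    simp only [g, k, Pi.neg_apply]
    linear_combination x * exp (-x * cosh t) * sinh_mul_sinh_mul ν t
  have hg : IntegrableOn g (Ioi 0) :=
    (((hk _).const_mul _).sub ((hk _).const_mul _)).sub ((hk _).const_mul _)
  have hH : IntegrableOn H (Ioi 0) := (hk ν).mono' (by fun_prop) (Eventually.of_forall fun t => by
    simp only [H, k, norm_mul, norm_neg, Real.norm_of_nonneg (exp_nonneg _), Real.norm_eq_abs]
    exact mul_le_mul_of_nonneg_left (abs_sinh_le_cosh _) (exp_nonneg _))
  have hFTC : ∫ t in Ioi 0, g t = 0 - H 0 :=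
    integral_Ioi_of_hasDerivAt_of_tendsto' (fun t _ => hderiv t) hg
      (tendsto_zero_of_hasDerivAt_of_integrableOn_Ioi (fun t _ => hderiv t) hg hH)
  have hsplit : ∫ t in Ioi 0, g t =
      x / 2 * besselK (ν + 1) x - x / 2 * besselK (ν - 1) x - ν * besselK ν x := by
    rw [integral_sub _ ((hk _).const_mul _), integral_sub ((hk _).const_mul _)
      ((hk _).const_mul _), integral_const_mul, integral_const_mul, integral_const_mul]
    · rfl
    · exact ((hk _).const_mul _).sub ((hk _).const_mul _)
  simp only [H, mul_zero, sinh_zero, sub_self] at hFTC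
  linarith

lemma hasDerivAt_besselK (ν : ℝ) {x : ℝ} (hx : 0 < x) :
    HasDerivAt (besselK ν) (-((besselK (ν - 1) x + besselK (ν + 1) x) / 2)) x := by
  have hk {y : ℝ} (hy : 0 < y) (ν : ℝ) :
      IntegrableOn (fun t => exp (-y * cosh t) * cosh (ν * t)) (Ioi 0) :=
    (integrable_exp_neg_mul_cosh_mul_cosh hy ν).integrableOn
  set F' : ℝ → ℝ → ℝ := fun y t => -(cosh t * (exp (-y * cosh t) * cosh (ν * t)))
  have hF' (y t : ℝ) : F' y t =
      -(exp (-y * cosh t) * cosh ((ν - 1) * t) + exp (-y * cosh t) * cosh ((ν + 1) * t)) / 2 := by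
    simp only [F']
    linear_combination -exp (-y * cosh t) * cosh_mul_cosh_mul ν t
  have hbound : ∀ᵐ t ∂volume.restrict (Ioi 0), ∀ y ∈ Metric.ball x (x / 2),
      ‖F' y t‖ ≤ cosh t * (exp (-(x / 2) * cosh t) * cosh (ν * t)) := by
    refine Eventually.of_forall fun t y hy => ?_
    have hy : x / 2 < y := by
      rw [Metric.mem_ball, Real.dist_eq, abs_lt] at hy; linarith
    rw [norm_neg, Real.norm_of_nonneg (by positivity)]
    gcongr
  have hbound_int : IntegrableOn (fun t => cosh t * (exp (-(x / 2) * cosh t) * cosh (ν * t)))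
      (Ioi 0) := by
    simp_rw [mul_left_comm (cosh _), cosh_mul_cosh_mul, mul_div_assoc', mul_add]
    exact ((hk (half_pos hx) _).add (hk (half_pos hx) _)).div_const 2
  have hdiff : ∀ᵐ t ∂volume.restrict (Ioi 0), ∀ y ∈ Metric.ball x (x / 2),
      HasDerivAt (fun y => exp (-y * cosh t) * cosh (ν * t)) (F' y t) y :=
    Eventually.of_forall fun t y _ =>
      ((((hasDerivAt_neg y).mul_const (cosh t)).exp).mul_const (cosh (ν * t))).congr_deriv
        (by simp only [F']; ring)
  have hmain := hasDerivAt_integral_of_dominated_loc_of_deriv_le (μ := volume.restrict (Ioi 0))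
    (F := fun y t => exp (-y * cosh t) * cosh (ν * t))
    (Metric.ball_mem_nhds x (half_pos hx)) (Eventually.of_forall fun y => by fun_prop)
    (hk hx ν) (by fun_prop) hbound hbound_int hdiff
  refine hmain.2.congr_deriv ?_
  simp_rw [hF', neg_div, integral_neg, integral_div]
  rw [integral_add (hk hx _) (hk hx _)]
  rfl

lemma besselK_le_exp_one_sub_mul (ν : ℝ) {x : ℝ} (hx : 1 ≤ x) :
    besselK ν x ≤ exp (1 - x) * besselK ν 1 := by
  rw [besselK, besselK, ← integral_const_mul]
  refine setIntegral_mono (integrable_exp_neg_mul_cosh_mul_cosh (by linarith) ν).integrableOn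
    ((integrable_exp_neg_mul_cosh_mul_cosh one_pos ν).const_mul _).integrableOn fun t => ?_
  rw [← mul_assoc, ← exp_add]
  gcongr
  nlinarith [one_le_cosh t]

lemma tendsto_pow_mul_besselK_atTop (ν : ℝ) (n : ℕ) :
    Tendsto (fun x => x ^ n * besselK ν x) atTop (𝓝 0) := by
  have hlim : Tendsto (fun x => exp 1 * besselK ν 1 * (x ^ n * exp (-x))) atTop (𝓝 0) := by
    simpa using (tendsto_pow_mul_exp_neg_atTop_nhds_zero n).const_mul (exp 1 * besselK ν 1)
  refine squeeze_zero' ?_ ?_ hlim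
  · filter_upwards [eventually_gt_atTop 0] with x hx
    exact mul_nonneg (pow_nonneg hx.le n) (besselK_pos ν hx).le
  · filter_upwards [eventually_ge_atTop 1] with x hx
    calc x ^ n * besselK ν x ≤ x ^ n * (exp (1 - x) * besselK ν 1) :=
          mul_le_mul_of_nonneg_left (besselK_le_exp_one_sub_mul ν hx) (by positivity)
      _ = exp 1 * besselK ν 1 * (x ^ n * exp (-x)) := by
          rw [sub_eq_add_neg, exp_add]; ring

noncomputable def besselQ (μ x : ℝ) : ℝ :=
  x * besselK (μ + 1 / 2) x ^ 2 - 2 * μ * (besselK (μ + 1 / 2) x * besselK (μ - 1 / 2) x) -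
    x * besselK (μ - 1 / 2) x ^ 2

lemma besselQ_neg_order (μ x : ℝ) : besselQ (-μ) x = -besselQ μ x := by
  simp only [besselQ, show -μ + 1 / 2 = -(μ - 1 / 2) by ring,
    show -μ - 1 / 2 = -(μ + 1 / 2) by ring, besselK_neg_order]
  ring

lemma hasDerivAt_besselQ (μ : ℝ) {x : ℝ} (hx : 0 < x) :
    HasDerivAt (besselQ μ) (2 * μ * (besselK (μ + 1 / 2) x * besselK (μ - 1 / 2) x) / x) x := by
  have hA := hasDerivAt_besselK (μ + 1 / 2) hx
  have hB := hasDerivAt_besselK (μ - 1 / 2) hx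
  have recA := besselK_recurrence (μ + 1 / 2) hx
  have recB := besselK_recurrence (μ - 1 / 2) hx
  rw [show μ + 1 / 2 - 1 = μ - 1 / 2 by ring] at hA recA
  rw [show μ - 1 / 2 + 1 = μ + 1 / 2 by ring] at hB recB
  have hQ := (((hasDerivAt_id x).mul (hA.pow 2)).sub ((hA.mul hB).const_mul (2 * μ))).sub
    ((hasDerivAt_id x).mul (hB.pow 2))
  refine hQ.congr_deriv ?_
  simp only [Pi.pow_apply, id, Nat.cast_ofNat]
  rw [eq_div_iff hx.ne']
  linear_combination (μ * besselK (μ - 1 / 2) x - x * besselK (μ + 1 / 2) x) * recA -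
    (x * besselK (μ - 1 / 2) x + μ * besselK (μ + 1 / 2) x) * recB

lemma tendsto_besselQ_atTop (μ : ℝ) : Tendsto (besselQ μ) atTop (𝓝 0) := by
  have hA0 := tendsto_pow_mul_besselK_atTop (μ + 1 / 2) 0
  have hA1 := tendsto_pow_mul_besselK_atTop (μ + 1 / 2) 1
  have hB0 := tendsto_pow_mul_besselK_atTop (μ - 1 / 2) 0
  have hB1 := tendsto_pow_mul_besselK_atTop (μ - 1 / 2) 1
  simp only [pow_zero, one_mul, pow_one] at hA0 hA1 hB0 hB1
  have := ((hA1.mul hA0).sub ((hA0.mul hB0).const_mul (2 * μ))).sub (hB1.mul hB0)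
  simp only [mul_zero, sub_zero] at this
  refine this.congr fun x => ?_
  simp only [besselQ]
  ring

lemma besselQ_neg {μ x : ℝ} (hμ : 0 < μ) (hx : 0 < x) : besselQ μ x < 0 := by
  have hmono : StrictMonoOn (besselQ μ) (Ioi 0) := by
    refine strictMonoOn_of_deriv_pos (convex_Ioi 0)
      (fun y hy => (hasDerivAt_besselQ μ hy).continuousAt.continuousWithinAt) fun y hy => ?_
    rw [interior_Ioi] at hy
    rw [(hasDerivAt_besselQ μ hy).deriv]
    have := besselK_pos (μ + 1 / 2) hy
    have := besselK_pos (μ - 1 / 2) hy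
    exact div_pos (by positivity) hy
  have hlim : besselQ μ (x + 1) ≤ 0 :=
    ge_of_tendsto (tendsto_besselQ_atTop μ) <| by
      filter_upwards [eventually_ge_atTop (x + 1)] with y hy
      exact hmono.monotoneOn (mem_Ioi.2 (by linarith)) (mem_Ioi.2 (by linarith)) hy
  linarith [hmono (mem_Ioi.2 hx) (mem_Ioi.2 (by linarith)) (lt_add_one x)]

lemma mul_besselQ_eq (μ x : ℝ) :
    x * besselQ μ x =
      (x * besselK (μ + 1 / 2) x - (μ + √(μ ^ 2 + x ^ 2)) * besselK (μ - 1 / 2) x) *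
        (x * besselK (μ + 1 / 2) x + (√(μ ^ 2 + x ^ 2) - μ) * besselK (μ - 1 / 2) x) := by
  have hT := sq_sqrt (by positivity : 0 ≤ μ ^ 2 + x ^ 2)
  simp only [besselQ]
  linear_combination besselK (μ - 1 / 2) x ^ 2 * hT

lemma sqrt_add_sq_sub_sqrt_add_sq_le {c : ℝ} (hc : 0 ≤ c) (u v : ℝ) :
    √(c + u ^ 2) - √(c + v ^ 2) ≤ |u - v| := by
  have hv : |v| ≤ √(c + v ^ 2) := abs_le_sqrt (by linarith)
  have huv : v * (u - v) ≤ |v| * |u - v| := by rw [← abs_mul]; exact le_abs_self _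
  rw [sub_le_iff_le_add, sqrt_le_left (by positivity), add_sq, sq_sqrt (by positivity), sq_abs]
  nlinarith [abs_nonneg (u - v)]

noncomputable def modeGap (α β δ μ x : ℝ) : ℝ :=
  α ^ 2 * x - β * (μ + √(μ ^ 2 + α ^ 2 * (δ ^ 2 + x ^ 2)))

lemma modeGap_strictMono {α β : ℝ} (δ μ : ℝ) (hβ : 0 ≤ β) (hβα : β < α) :
    StrictMono (modeGap α β δ μ) := by
  intro x x' hxx'
  have hα : 0 < α := hβ.trans_lt hβα
  have hsqrt := sqrt_add_sq_sub_sqrt_add_sq_le (by positivity : 0 ≤ μ ^ 2 + α ^ 2 * δ ^ 2)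
    (α * x') (α * x)
  rw [← mul_sub, abs_mul, abs_of_pos hα, abs_of_pos (sub_pos.2 hxx')] at hsqrt
  simp only [modeGap]
  rw [show μ ^ 2 + α ^ 2 * (δ ^ 2 + x ^ 2) = μ ^ 2 + α ^ 2 * δ ^ 2 + (α * x) ^ 2 by ring,
    show μ ^ 2 + α ^ 2 * (δ ^ 2 + x' ^ 2) = μ ^ 2 + α ^ 2 * δ ^ 2 + (α * x') ^ 2 by ring]
  nlinarith [mul_le_mul_of_nonneg_left hsqrt hβ, mul_pos (mul_pos hα (sub_pos.2 hβα))
    (sub_pos.2 hxx')]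

lemma modeGap_eq_zero {α β γ : ℝ} (δ μ : ℝ) (hβ : 0 < β) (hγ : γ ^ 2 = α ^ 2 - β ^ 2)
    (hγ0 : γ ≠ 0) : modeGap α β δ μ (β / γ ^ 2 * (μ + √(μ ^ 2 + δ ^ 2 * γ ^ 2))) = 0 := by
  set S := √(μ ^ 2 + δ ^ 2 * γ ^ 2)
  set M := β / γ ^ 2 * (μ + S)
  have hS : S ^ 2 = μ ^ 2 + δ ^ 2 * γ ^ 2 := sq_sqrt (by positivity)
  have hμS : |μ| ≤ S := abs_le_sqrt (by nlinarith [sq_nonneg (δ * γ)])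
  have hM : γ ^ 2 * M = β * (μ + S) := by simp only [M]; field_simp
  -- `M` is the positive root of `γ² M² - 2 β μ M - β² δ² = 0`
  have hquad : γ ^ 2 * M ^ 2 - 2 * β * μ * M - β ^ 2 * δ ^ 2 = 0 := by
    refine (mul_eq_zero.1 ?_).resolve_left (pow_ne_zero 2 hγ0)
    linear_combination (γ ^ 2 * M + β * (μ + S) - 2 * β * μ) * hM + β ^ 2 * hS
  have hlin : 0 ≤ α ^ 2 * M - β * μ := by
    have : γ ^ 2 * (α ^ 2 * M - β * μ) = β * (γ ^ 2 * S + β ^ 2 * (μ + S)) := by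
      linear_combination α ^ 2 * hM - β * (μ + S) * hγ
    have hμS' : 0 ≤ μ + S := by linarith [neg_abs_le μ]
    refine (mul_nonneg_iff_of_pos_left (by positivity : 0 < γ ^ 2)).1 ?_
    rw [this]
    have := sqrt_nonneg (μ ^ 2 + δ ^ 2 * γ ^ 2)
    positivity
  have hsq : β ^ 2 * (μ ^ 2 + α ^ 2 * (δ ^ 2 + M ^ 2)) = (α ^ 2 * M - β * μ) ^ 2 := by
    linear_combination -α ^ 2 * hquad + α ^ 2 * M ^ 2 * hγ
  have hroot := congrArg sqrt hsq
  rw [sqrt_mul (sq_nonneg _), sqrt_sq hβ.le, sqrt_sq hlin] at hroot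
  simp only [modeGap]
  linarith

lemma exists_pos_mul_modeGap_eq_besselQ {α β δ μ x : ℝ} (hα : 0 < α) (hβ : 0 < β) (hδ : 0 < δ)
    (hx : x / √(δ ^ 2 + x ^ 2) * (besselK (μ - 1 / 2) (α * √(δ ^ 2 + x ^ 2)) /
      besselK (μ + 1 / 2) (α * √(δ ^ 2 + x ^ 2))) = β / α) :
    ∃ c > 0, c * modeGap α β δ μ x = besselQ μ (α * √(δ ^ 2 + x ^ 2)) := by
  set s := √(δ ^ 2 + x ^ 2)
  set y := α * s
  set A := besselK (μ + 1 / 2) y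
  set B := besselK (μ - 1 / 2) y
  set T := √(μ ^ 2 + y ^ 2)
  have hs : 0 < s := sqrt_pos.2 (by positivity)
  have hy : 0 < y := mul_pos hα hs
  have hA : 0 < A := besselK_pos _ hy
  have hB : 0 < B := besselK_pos _ hy
  have hmode : α ^ 2 * x * B = β * y * A := by
    rw [div_mul_div_comm, div_eq_div_iff (by positivity) (by positivity)] at hx
    linear_combination α * hx
  have hT : √(μ ^ 2 + α ^ 2 * (δ ^ 2 + x ^ 2)) = T := by
    rw [show α ^ 2 * (δ ^ 2 + x ^ 2) = y ^ 2 by rw [mul_pow, sq_sqrt (by positivity)]]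
  have hgap : modeGap α β δ μ x * B = β * (y * A - (μ + T) * B) := by
    simp only [modeGap, hT]
    linear_combination hmode
  have hP : 0 < y * A + (T - μ) * B := by
    have : μ ≤ T := (le_abs_self μ).trans (abs_le_sqrt (by nlinarith))
    have := mul_pos hy hA
    nlinarith
  refine ⟨B * (y * A + (T - μ) * B) / (β * y), by positivity, ?_⟩
  rw [div_mul_eq_mul_div, div_eq_iff (by positivity)]
  linear_combination (y * A + (T - μ) * B) * hgap - β * mul_besselQ_eq μ y

theorem stmt_2 (lam α β δ γ : ℝ) (hα : 0 < α) (hβ : 0 < β) (hβα : β < α) (hδ : 0 < δ)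
    (hγ : γ = Real.sqrt (α ^ 2 - β ^ 2)) (x : ℝ)
    (hx : x / Real.sqrt (δ ^ 2 + x ^ 2) *
        (besselK (lam - 3 / 2) (α * Real.sqrt (δ ^ 2 + x ^ 2)) /
          besselK (lam - 1 / 2) (α * Real.sqrt (δ ^ 2 + x ^ 2))) = β / α) :
    (1 < lam → x < β / γ ^ 2 * (lam - 1 + Real.sqrt ((lam - 1) ^ 2 + δ ^ 2 * γ ^ 2))) ∧
    (lam < 1 → x > β / γ ^ 2 * (lam - 1 + Real.sqrt ((lam - 1) ^ 2 + δ ^ 2 * γ ^ 2))) ∧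
    (lam = 1 → x = β / γ ^ 2 * (lam - 1 + Real.sqrt ((lam - 1) ^ 2 + δ ^ 2 * γ ^ 2))) := by
  have hγ2 : γ ^ 2 = α ^ 2 - β ^ 2 := by rw [hγ, sq_sqrt (by nlinarith)]
  have hγ0 : γ ≠ 0 := by rw [hγ]; exact (sqrt_pos.2 (by nlinarith)).ne'
  have hroot := modeGap_eq_zero δ (lam - 1) hβ hγ2 hγ0
  have hmono := modeGap_strictMono δ (lam - 1) hβ.le hβα
  rw [show lam - 3 / 2 = lam - 1 - 1 / 2 by ring, show lam - 1 / 2 = lam - 1 + 1 / 2 by ring] at hx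
  obtain ⟨c, hc, hcQ⟩ := exists_pos_mul_modeGap_eq_besselQ hα hβ hδ hx
  have hy : 0 < α * √(δ ^ 2 + x ^ 2) := mul_pos hα (sqrt_pos.2 (by positivity))
  refine ⟨fun hlam => ?_, fun hlam => ?_, fun hlam => ?_⟩
  · have hQ := besselQ_neg (sub_pos.2 hlam) hy
    refine hmono.lt_iff_lt.1 ?_
    rw [hroot]
    nlinarith
  · have hQ := besselQ_neg (sub_pos.2 hlam) hy
    rw [show 1 - lam = -(lam - 1) by ring, besselQ_neg_order] at hQ
    refine hmono.lt_iff_lt.1 ?_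
    rw [hroot]
    nlinarith
  · rw [hlam, sub_self] at hcQ hroot hmono ⊢
    have hQ := besselQ_neg_order 0 (α * √(δ ^ 2 + x ^ 2))
    rw [neg_zero, self_eq_neg, ← hcQ] at hQ
    exact hmono.injective (by rw [hroot, (mul_eq_zero.1 hQ).resolve_left hc.ne'])
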